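/- arXiv:1501.00234 — 4 statements merged into one kernel-verified Lean document; each statement's English description precedes it below -/
import Mathlib

section
/- Under the hypotheses of the commutant lifting theorem, the map θ sending A ∈ (V* B V)′ to the unique A₁ ∈ B′ with V A = A₁ V is a *-homomorphism whose image lies in B′ ∩ {V V*}′. -/
noncomputable section

open ContinuousLinearMap

private lemma clift_ext {K W : Type*} [NormedAddCommGroup K] [NormedSpace ℂ K]
    [NormedAddCommGroup W] [NormedSpace ℂ W]
    (S : Set K) (hS : (Submodule.span ℂ S).topologicalClosure = ⊤)
    (T T' : K →L[ℂ] W) (h : ∀ x ∈ S, T x = T' x) : T = T' := by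
  refine ContinuousLinearMap.ext_on ?_ h
  rwa [← Submodule.dense_iff_topologicalClosure_eq_top] at hS

/-- Under the hypotheses of the commutant lifting theorem, the lifting map
`θ : (V*BV)′ → B′`, characterized by `V A = θ(A) V` and `θ(A) ∈ B′`, is a
*-homomorphism whose image lies in `B′ ∩ {V V*}′`. -/
theorem commutant_lifting_star_hom
    {H K : Type*} [NormedAddCommGroup H] [InnerProductSpace ℂ H] [CompleteSpace H]
    [NormedAddCommGroup K] [InnerProductSpace ℂ K] [CompleteSpace K]
    (B : StarSubalgebra ℂ (K →L[ℂ] K)) (V : H →L[ℂ] K)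
    (hspan : (Submodule.span ℂ
        {k : K | ∃ b ∈ B, ∃ h : H, k = b (V h)}).topologicalClosure = ⊤)
    (θ : (H →L[ℂ] H) → (K →L[ℂ] K))
    (hθ : ∀ A : H →L[ℂ] H,
      (∀ b ∈ B, A * ((ContinuousLinearMap.adjoint V).comp (b.comp V)) =
          ((ContinuousLinearMap.adjoint V).comp (b.comp V)) * A) →
      (∀ b ∈ B, θ A * b = b * θ A) ∧ V.comp A = (θ A).comp V) :
    ∀ A A' : H →L[ℂ] H,
      (∀ b ∈ B, A * ((ContinuousLinearMap.adjoint V).comp (b.comp V)) =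
          ((ContinuousLinearMap.adjoint V).comp (b.comp V)) * A) →
      (∀ b ∈ B, A' * ((ContinuousLinearMap.adjoint V).comp (b.comp V)) =
          ((ContinuousLinearMap.adjoint V).comp (b.comp V)) * A') →
      θ (A + A') = θ A + θ A' ∧
      (∀ c : ℂ, θ (c • A) = c • θ A) ∧
      θ (A * A') = θ A * θ A' ∧
      θ (ContinuousLinearMap.adjoint A) = ContinuousLinearMap.adjoint (θ A) ∧
      θ A * (V.comp (ContinuousLinearMap.adjoint V)) =
        (V.comp (ContinuousLinearMap.adjoint V)) * θ A := by
  intro A A' hA hA'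
  set S : Set K := {k : K | ∃ b ∈ B, ∃ h : H, k = b (V h)} with hSdef
  obtain ⟨hc, hv⟩ := hθ A hA
  obtain ⟨hc', hv'⟩ := hθ A' hA'
  -- pointwise versions
  have hvx : ∀ x, V (A x) = θ A (V x) := fun x => by
    have := ContinuousLinearMap.ext_iff.mp hv x; simpa using this
  have hv'x : ∀ x, V (A' x) = θ A' (V x) := fun x => by
    have := ContinuousLinearMap.ext_iff.mp hv' x; simpa using this
  have hcx : ∀ b ∈ B, ∀ x, θ A (b x) = b (θ A x) := by
    intro b hb x
    have := ContinuousLinearMap.ext_iff.mp (hc b hb) x; simpa using this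
  have hc'x : ∀ b ∈ B, ∀ x, θ A' (b x) = b (θ A' x) := by
    intro b hb x
    have := ContinuousLinearMap.ext_iff.mp (hc' b hb) x; simpa using this
  have hAx : ∀ b ∈ B, ∀ x, A ((ContinuousLinearMap.adjoint V) (b (V x))) =
      (ContinuousLinearMap.adjoint V) (b (V (A x))) := by
    intro b hb x
    have := ContinuousLinearMap.ext_iff.mp (hA b hb) x; simpa using this
  -- uniqueness of the lift among B-commuting operators
  have uniq : ∀ X Y : K →L[ℂ] K, (∀ b ∈ B, X * b = b * X) → (∀ b ∈ B, Y * b = b * Y) →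
      X.comp V = Y.comp V → X = Y := by
    intro X Y hX hY hXY
    refine clift_ext S hspan X Y ?_
    rintro x ⟨b, hb, h, rfl⟩
    have h1 : X (b (V h)) = b (X (V h)) := by
      have := ContinuousLinearMap.ext_iff.mp (hX b hb) (V h); simpa using this
    have h2 : Y (b (V h)) = b (Y (V h)) := by
      have := ContinuousLinearMap.ext_iff.mp (hY b hb) (V h); simpa using this
    have h3 : X (V h) = Y (V h) := by
      have := ContinuousLinearMap.ext_iff.mp hXY h; simpa using this
    rw [h1, h2, h3]
  refine ⟨?_, ?_, ?_, ?_, ?_⟩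
  · -- additivity
    have hmem : ∀ b ∈ B, (A + A') * ((ContinuousLinearMap.adjoint V).comp (b.comp V)) =
        ((ContinuousLinearMap.adjoint V).comp (b.comp V)) * (A + A') := by
      intro b hb; rw [add_mul, mul_add, hA b hb, hA' b hb]
    obtain ⟨hc2, hv2⟩ := hθ (A + A') hmem
    refine uniq _ _ hc2 ?_ ?_
    · intro b hb; rw [add_mul, mul_add, hc b hb, hc' b hb]
    · rw [← hv2, ContinuousLinearMap.comp_add, hv, hv', ContinuousLinearMap.add_comp]
  · -- scalar multiplication
    intro c
    have hmem : ∀ b ∈ B, (c • A) * ((ContinuousLinearMap.adjoint V).comp (b.comp V)) =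
        ((ContinuousLinearMap.adjoint V).comp (b.comp V)) * (c • A) := by
      intro b hb; rw [smul_mul_assoc, mul_smul_comm, hA b hb]
    obtain ⟨hc2, hv2⟩ := hθ (c • A) hmem
    refine uniq _ _ hc2 ?_ ?_
    · intro b hb; rw [smul_mul_assoc, mul_smul_comm, hc b hb]
    · rw [← hv2, ContinuousLinearMap.comp_smul, hv, ContinuousLinearMap.smul_comp]
  · -- multiplicativity
    have hmem : ∀ b ∈ B, (A * A') * ((ContinuousLinearMap.adjoint V).comp (b.comp V)) =
        ((ContinuousLinearMap.adjoint V).comp (b.comp V)) * (A * A') := by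
      intro b hb
      rw [mul_assoc, hA' b hb, ← mul_assoc, hA b hb, mul_assoc]
    obtain ⟨hc2, hv2⟩ := hθ (A * A') hmem
    refine uniq _ _ hc2 ?_ ?_
    · intro b hb; rw [mul_assoc, hc' b hb, ← mul_assoc, hc b hb, mul_assoc]
    · rw [← hv2]
      ext x
      simp only [ContinuousLinearMap.comp_apply, ContinuousLinearMap.mul_apply]
      rw [hvx, hv'x]
  · -- star preserving
    have hmem : ∀ b ∈ B, (ContinuousLinearMap.adjoint A) *
        ((ContinuousLinearMap.adjoint V).comp (b.comp V)) =
        ((ContinuousLinearMap.adjoint V).comp (b.comp V)) * (ContinuousLinearMap.adjoint A) := by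
      intro b hb
      have h := congrArg star (hA (star b) (star_mem hb))
      simp only [star_mul, ContinuousLinearMap.star_eq_adjoint,
        ContinuousLinearMap.adjoint_comp, ContinuousLinearMap.adjoint_adjoint] at h
      rw [ContinuousLinearMap.comp_assoc] at h
      exact h.symm
    obtain ⟨hc2, hv2⟩ := hθ (ContinuousLinearMap.adjoint A) hmem
    -- key : A ∘ V† = V† ∘ θA
    have key : A.comp (ContinuousLinearMap.adjoint V) =
        (ContinuousLinearMap.adjoint V).comp (θ A) := by
      refine clift_ext S hspan _ _ ?_
      rintro x ⟨b, hb, h, rfl⟩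
      simp only [ContinuousLinearMap.comp_apply]
      rw [hAx b hb, hvx, hcx b hb]
    refine uniq _ _ hc2 ?_ ?_
    · intro b hb
      have h := congrArg star (hc (star b) (star_mem hb))
      simp only [star_mul, ContinuousLinearMap.star_eq_adjoint,
        ContinuousLinearMap.adjoint_adjoint] at h
      exact h.symm
    · rw [← hv2]
      have h := congrArg ContinuousLinearMap.adjoint key
      simp only [ContinuousLinearMap.adjoint_comp, ContinuousLinearMap.adjoint_adjoint] at h
      exact h
  · -- commutes with V V†
    refine clift_ext S hspan _ _ ?_
    rintro x ⟨b, hb, h, rfl⟩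
    simp only [ContinuousLinearMap.mul_apply, ContinuousLinearMap.comp_apply]
    rw [← hvx, hcx b hb, ← hvx, ← hAx b hb]
end
end

section
/- Let T₁, T₂ be completely positive maps X → B(H) and T = T₁ + T₂ with minimal Stinespring representation (π_T, K_T, V_T). If there is a projection P ∈ π_T(X)′ with T₁(x) = V_T* P π_T(x) V_T and T₂(x) = V_T*(1−P) π_T(x) V_T for all x, then any completely positive T′ with T′ ≤ T₁ and T′ ≤ T₂ is zero. -/
open scoped ComplexOrder InnerProductSpace

noncomputable section

/-- A matrix over a star ring is positive if it is of the form `Nᴴ * N`. -/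
def MatPos {A : Type*} [Ring A] [StarRing A] {n : ℕ}
    (M : Matrix (Fin n) (Fin n) A) : Prop :=
  ∃ N : Matrix (Fin n) (Fin n) A, M = N.conjTranspose * N

/-- `T` is completely positive if the induced entrywise maps on matrices are positive. -/
def CompletelyPositiveFun {A B : Type*} [Ring A] [StarRing A] [Ring B] [StarRing B]
    (T : A → B) : Prop :=
  ∀ (n : ℕ) (M : Matrix (Fin n) (Fin n) A), MatPos M → MatPos (M.map T)

/-- `(π, K, V)` is a Stinespring representation of `T : X → B(H)`:
`T x = V* (π x) V` for all `x`. -/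
def IsStinespring {X : Type*} [NormedRing X] [StarRing X] [CStarRing X]
    [NormedAlgebra ℂ X] [StarModule ℂ X]
    {H K : Type*} [NormedAddCommGroup H] [InnerProductSpace ℂ H] [CompleteSpace H]
    [NormedAddCommGroup K] [InnerProductSpace ℂ K] [CompleteSpace K]
    (T : X → (H →L[ℂ] H)) (π : X →⋆ₐ[ℂ] (K →L[ℂ] K)) (V : H →L[ℂ] K) : Prop :=
  ∀ x : X, T x = (ContinuousLinearMap.adjoint V).comp ((π x).comp V)

/-- Minimality: the closed linear span of `π(X) V H` is all of `K`. -/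
def IsMinimalStinespring {X : Type*} [NormedRing X] [StarRing X] [CStarRing X]
    [NormedAlgebra ℂ X] [StarModule ℂ X]
    {H K : Type*} [NormedAddCommGroup H] [InnerProductSpace ℂ H] [CompleteSpace H]
    [NormedAddCommGroup K] [InnerProductSpace ℂ K] [CompleteSpace K]
    (π : X →⋆ₐ[ℂ] (K →L[ℂ] K)) (V : H →L[ℂ] K) : Prop :=
  (Submodule.span ℂ {k : K | ∃ (x : X) (h : H), k = π x (V h)}).topologicalClosure = ⊤

/-! A completely positive `T'` induces a positive semidefinite form
`⟪a ⊗ u, b ⊗ v⟫ = ⟪u, T' (a⋆ b) v⟫` on `X ⊗ H`; write `‖·‖'` for its seminorm and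
`L (a ⊗ u) = π a (V u)`, which has dense range by minimality. `T' ≤ T₁` and `T' ≤ T₂` give
`‖ξ‖' ≤ ‖P (L ξ)‖` and `‖ξ‖' ≤ ‖(1 - P) (L ξ)‖`. Approximating `P (L ξ)` by `L η`,
`‖ξ‖' ≤ ‖η‖' + ‖ξ - η‖' ≤ 2 ‖L η - P (L ξ)‖`, so the seminorm vanishes identically, and then
`T' = 0` by Cauchy–Schwarz. -/

section Positivity

variable {A : Type*} [Ring A] [StarRing A]
  {H : Type*} [NormedAddCommGroup H] [InnerProductSpace ℂ H] [CompleteSpace H]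

theorem MatPos.sum_inner_nonneg {n : ℕ} {M : Matrix (Fin n) (Fin n) (H →L[ℂ] H)}
    (hM : MatPos M) (h : Fin n → H) : 0 ≤ ∑ i, ∑ j, ⟪h i, M i j (h j)⟫_ℂ := by
  obtain ⟨R, rfl⟩ := hM
  have hsum : ∑ i, ∑ j, ⟪h i, (R.conjTranspose * R) i j (h j)⟫_ℂ
      = ∑ k, ⟪∑ i, R k i (h i), ∑ j, R k j (h j)⟫_ℂ := by
    simp only [Matrix.mul_apply, Matrix.conjTranspose_apply, FunLike.coe_sum,
      Finset.sum_apply, ContinuousLinearMap.mul_def, ContinuousLinearMap.comp_apply,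
      ContinuousLinearMap.star_eq_adjoint, ContinuousLinearMap.adjoint_inner_right, inner_sum,
      sum_inner]
    rw [Finset.sum_comm_cycle]
    exact Finset.sum_congr rfl fun k _ => by rw [Finset.sum_comm]
  rw [hsum]
  refine Finset.sum_nonneg fun k _ => ?_
  rw [inner_self_eq_norm_sq_to_K, ← RCLike.ofReal_pow]
  exact RCLike.ofReal_nonneg.mpr (sq_nonneg _)

theorem CompletelyPositiveFun.map_star {B : Type*} [Ring B] [StarRing B] {T : A → B}
    (hT : CompletelyPositiveFun T) (x : A) : T (star x) = star (T x) := by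
  set M := !![1, x; 0, 0].conjTranspose * !![1, x; 0, 0]
  obtain ⟨R, hR⟩ := hT 2 M ⟨_, rfl⟩
  have hself_adjoint : (M.map T).conjTranspose = M.map T := by
    rw [hR, Matrix.conjTranspose_mul, Matrix.conjTranspose_conjTranspose]
  simpa [M, Matrix.mul_apply, Fin.sum_univ_two] using (congrFun (congrFun hself_adjoint 1) 0).symm

theorem CompletelyPositiveFun.sum_inner_nonneg {ι : Type*} [Fintype ι]
    {T : A → H →L[ℂ] H} (hT : CompletelyPositiveFun T) (x : ι → A) (h : ι → H) :
    0 ≤ ∑ i, ∑ j, ⟪h i, T (star (x i) * x j) (h j)⟫_ℂ := by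
  rcases isEmpty_or_nonempty ι with hι | ⟨⟨i₀⟩⟩
  · simp
  obtain ⟨n, ⟨e⟩⟩ := Finite.exists_equiv_fin ι
  let N : Matrix (Fin n) (Fin n) A := Matrix.of fun k l => if k = e i₀ then x (e.symm l) else 0
  have hN : ∀ k l, (N.conjTranspose * N) k l = star (x (e.symm k)) * x (e.symm l) := by
    simp [N, Matrix.mul_apply, Matrix.conjTranspose_apply, apply_ite star, ite_mul]
  convert (hT n _ ⟨N, rfl⟩).sum_inner_nonneg (h ∘ e.symm) using 1
  exact Fintype.sum_equiv e _ _ fun i => Fintype.sum_equiv e _ _ fun j => by simp [hN]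

end Positivity

section StinespringForm

variable {A : Type*} [Ring A] [StarRing A]
  {H : Type*} [NormedAddCommGroup H] [InnerProductSpace ℂ H]

/-- `A →₀ H` stands in for the algebraic tensor product `A ⊗ H` of Stinespring's construction,
`T` inducing the form `⟪a ⊗ u, b ⊗ v⟫ = ⟪u, T (a⋆ b) v⟫` on it. -/
def stinespringForm (T : A → H →L[ℂ] H) (f g : A →₀ H) : ℂ :=
  f.sum fun a u => g.sum fun b v => ⟪u, T (star a * b) v⟫_ℂ

variable (T : A → H →L[ℂ] H)

theorem stinespringForm_single_single (a b : A) (u v : H) :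
    stinespringForm T (Finsupp.single a u) (Finsupp.single b v) = ⟪u, T (star a * b) v⟫_ℂ := by
  simp [stinespringForm]

theorem stinespringForm_add_left (f f' g : A →₀ H) :
    stinespringForm T (f + f') g = stinespringForm T f g + stinespringForm T f' g :=
  Finsupp.sum_add_index' (by simp) fun a u u' => by simp [Finsupp.sum_add]

theorem stinespringForm_smul_left (c : ℂ) (f g : A →₀ H) :
    stinespringForm T (c • f) g = starRingEnd ℂ c * stinespringForm T f g := by
  rw [stinespringForm, Finsupp.sum_smul_index' (by simp)]
  simp only [stinespringForm, Finsupp.sum, inner_smul_left, Finset.mul_sum]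

theorem stinespringForm_sub (S : A → H →L[ℂ] H) (f g : A →₀ H) :
    stinespringForm (fun x => S x - T x) f g = stinespringForm S f g - stinespringForm T f g := by
  simp [stinespringForm, Finsupp.sum_sub]

variable {T}

theorem CompletelyPositiveFun.conj_stinespringForm [CompleteSpace H]
    (hT : CompletelyPositiveFun T) (f g : A →₀ H) :
    starRingEnd ℂ (stinespringForm T g f) = stinespringForm T f g := by
  simp only [stinespringForm, Finsupp.sum, map_sum, inner_conj_symm]
  rw [Finset.sum_comm]
  refine Finset.sum_congr rfl fun a _ => Finset.sum_congr rfl fun b _ => ?_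
  rw [← ContinuousLinearMap.adjoint_inner_right, ← ContinuousLinearMap.star_eq_adjoint,
    ← hT.map_star, star_mul, star_star]

theorem CompletelyPositiveFun.stinespringForm_self_nonneg [CompleteSpace H]
    (hT : CompletelyPositiveFun T) (f : A →₀ H) : 0 ≤ stinespringForm T f f := by
  simpa only [stinespringForm, Finsupp.sum, ← Finset.sum_coe_sort f.support]
    using hT.sum_inner_nonneg (fun a : f.support => (a : A)) (fun a => f a)

abbrev CompletelyPositiveFun.preInnerProductCore [CompleteSpace H] (hT : CompletelyPositiveFun T) :
    PreInnerProductSpace.Core ℂ (A →₀ H) where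
  inner := stinespringForm T
  conj_inner_symm := hT.conj_stinespringForm
  re_inner_nonneg f := (Complex.nonneg_iff.mp (hT.stinespringForm_self_nonneg f)).1
  add_left := stinespringForm_add_left T
  smul_left f g c := stinespringForm_smul_left T c f g

end StinespringForm

theorem IsStarProjection.norm_apply_le {𝕜 K : Type*} [RCLike 𝕜] [NormedAddCommGroup K]
    [InnerProductSpace 𝕜 K] [CompleteSpace K] {P : K →L[𝕜] K} (hP : IsStarProjection P) (w : K) :
    ‖P w‖ ≤ ‖w‖ :=
  (P.le_of_opNorm_le (hP.norm_le P) w).trans_eq (one_mul _)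

theorem norm_eq_zero_of_le_complementary_projections {E 𝕜 K : Type*} [SeminormedAddCommGroup E]
    [RCLike 𝕜] [NormedAddCommGroup K] [InnerProductSpace 𝕜 K] [CompleteSpace K]
    {L : E →+ K} (hL : DenseRange L) {P : K →L[𝕜] K} (hP : IsStarProjection P)
    (h₁ : ∀ f, ‖f‖ ≤ ‖P (L f)‖) (h₂ : ∀ f, ‖f‖ ≤ ‖(1 - P) (L f)‖) (f : E) : ‖f‖ = 0 := by
  refine le_antisymm (le_of_forall_pos_lt_add fun ε hε => ?_) (norm_nonneg f)
  obtain ⟨g, hg⟩ := hL.exists_dist_lt (P (L f)) (half_pos hε)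
  rw [dist_comm, dist_eq_norm] at hg
  have hg₁ : ‖g‖ ≤ ‖L g - P (L f)‖ := by
    have : (1 - P) (L g) = (1 - P) (L g - P (L f)) := by
      rw [map_sub, ← mul_apply_eq_comp, hP.one_sub_mul_self]
      simp
    exact (h₂ g).trans (this ▸ hP.one_sub.norm_apply_le _)
  have hg₂ : ‖f - g‖ ≤ ‖L g - P (L f)‖ := by
    have : P (L (f - g)) = P (P (L f) - L g) := by
      rw [map_sub, map_sub, map_sub, ← mul_apply_eq_comp, hP.isIdempotentElem.eq]
    exact (h₁ _).trans (this ▸ (hP.norm_apply_le _).trans_eq (norm_sub_rev _ _))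
  linarith [norm_le_insert' f g]

section StinespringMap

open ContinuousLinearMap

variable {A : Type*} [Ring A] [StarRing A] [Algebra ℂ A]
  {H K : Type*} [NormedAddCommGroup H] [InnerProductSpace ℂ H]
  [NormedAddCommGroup K] [InnerProductSpace ℂ K] [CompleteSpace K]

def stinespringMap (π : A →⋆ₐ[ℂ] (K →L[ℂ] K)) (W : H →L[ℂ] K) : (A →₀ H) →ₗ[ℂ] K :=
  Finsupp.lsum ℂ fun a => ((π a).comp W : H →ₗ[ℂ] K)

variable {π : A →⋆ₐ[ℂ] (K →L[ℂ] K)}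

theorem stinespringMap_single (W : H →L[ℂ] K) (a : A) (u : H) :
    stinespringMap π W (Finsupp.single a u) = π a (W u) := by
  simp [stinespringMap]

theorem stinespringForm_eq_inner [CompleteSpace H] {T : A → H →L[ℂ] H} {W : H →L[ℂ] K}
    (hT : ∀ x, T x = adjoint W ∘L (π x ∘L W)) (f g : A →₀ H) :
    stinespringForm T f g = ⟪stinespringMap π W f, stinespringMap π W g⟫_ℂ := by
  simp only [stinespringForm, stinespringMap, Finsupp.lsum_apply, Finsupp.sum, sum_inner,
    inner_sum, hT]
  rw [Finset.sum_comm]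
  simp [adjoint_inner_right, mul_apply_eq_comp, map_star, star_eq_adjoint]

theorem stinespringMap_comp {Q : K →L[ℂ] K} (hcomm : ∀ x, Commute Q (π x)) (W : H →L[ℂ] K)
    (f : A →₀ H) : stinespringMap π (Q ∘L W) f = Q (stinespringMap π W f) := by
  simp only [stinespringMap, Finsupp.lsum_apply, Finsupp.sum, map_sum]
  exact Finset.sum_congr rfl fun a _ => (DFunLike.congr_fun (hcomm a).eq _).symm

theorem adjoint_comp_starProjection_comp [CompleteSpace H]
    {Q : K →L[ℂ] K} (hQ : IsStarProjection Q)
    {R : K →L[ℂ] K} (hcomm : Commute Q R) (W : H →L[ℂ] K) :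
    adjoint W ∘L (Q ∘L (R ∘L W)) = adjoint (Q ∘L W) ∘L (R ∘L (Q ∘L W)) := by
  have hQRQ : Q * (R * Q) = Q * R := by
    rw [← hcomm.eq, ← mul_assoc, hQ.isIdempotentElem.eq]
  rw [adjoint_comp, ← star_eq_adjoint Q, hQ.isSelfAdjoint.star_eq]
  ext v
  exact congr(adjoint W ($hQRQ (W v))).symm

theorem stinespringForm_self_eq_norm_sq [CompleteSpace H]
    {T : A → H →L[ℂ] H} {V : H →L[ℂ] K} {Q : K →L[ℂ] K}
    (hQ : IsStarProjection Q) (hcomm : ∀ x, Commute Q (π x))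
    (hT : ∀ x, T x = adjoint V ∘L (Q ∘L (π x ∘L V))) (f : A →₀ H) :
    (stinespringForm T f f).re = ‖Q (stinespringMap π V f)‖ ^ 2 := by
  rw [stinespringForm_eq_inner (W := Q ∘L V), stinespringMap_comp hcomm]
  · exact inner_self_eq_norm_sq (𝕜 := ℂ) _
  intro x
  rw [hT, adjoint_comp_starProjection_comp hQ (hcomm x)]

theorem sqrt_re_stinespringForm_le [CompleteSpace H]
    {V : H →L[ℂ] K} {Q : K →L[ℂ] K} {S T : A → H →L[ℂ] H}
    (hQ : IsStarProjection Q) (hcomm : ∀ x, Commute Q (π x))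
    (hle : CompletelyPositiveFun fun x => S x - T x)
    (hS : ∀ x, S x = adjoint V ∘L (Q ∘L (π x ∘L V))) (f : A →₀ H) :
    √(stinespringForm T f f).re ≤ ‖Q (stinespringMap π V f)‖ := by
  have hsub := (Complex.nonneg_iff.mp (hle.stinespringForm_self_nonneg f)).1
  rw [stinespringForm_sub, Complex.sub_re, stinespringForm_self_eq_norm_sq hQ hcomm hS] at hsub
  exact Real.sqrt_le_iff.mpr ⟨norm_nonneg _, by linarith⟩

end StinespringMap

theorem IsMinimalStinespring.denseRange_stinespringMap {X : Type*} [NormedRing X] [StarRing X]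
    [CStarRing X] [NormedAlgebra ℂ X] [StarModule ℂ X]
    {H K : Type*} [NormedAddCommGroup H] [InnerProductSpace ℂ H] [CompleteSpace H]
    [NormedAddCommGroup K] [InnerProductSpace ℂ K] [CompleteSpace K]
    {π : X →⋆ₐ[ℂ] (K →L[ℂ] K)} {V : H →L[ℂ] K} (hmin : IsMinimalStinespring π V) :
    DenseRange (stinespringMap π V) := by
  have hspan : Submodule.span ℂ {k : K | ∃ (x : X) (h : H), k = π x (V h)}
      ≤ LinearMap.range (stinespringMap π V) := by
    rw [Submodule.span_le]
    rintro _ ⟨x, h, rfl⟩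
    exact ⟨Finsupp.single x h, stinespringMap_single V x h⟩
  have hclosure := Submodule.topologicalClosure_mono hspan
  rw [hmin, top_le_iff] at hclosure
  exact Submodule.dense_iff_topologicalClosure_eq_top.mpr hclosure

theorem cp_orthogonal_of_projection_general
    {X : Type*} [NormedRing X] [StarRing X] [CStarRing X]
    [NormedAlgebra ℂ X] [StarModule ℂ X]
    {H K : Type*} [NormedAddCommGroup H] [InnerProductSpace ℂ H] [CompleteSpace H]
    [NormedAddCommGroup K] [InnerProductSpace ℂ K] [CompleteSpace K]
    (T₁ T₂ : X →ₗ[ℂ] (H →L[ℂ] H))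
    (π : X →⋆ₐ[ℂ] (K →L[ℂ] K)) (V : H →L[ℂ] K)
    (hmin : IsMinimalStinespring π V)
    (P : K →L[ℂ] K) (hproj : IsIdempotentElem P) (hsa : IsSelfAdjoint P)
    (hcomm : ∀ x : X, P * π x = π x * P)
    (h₁ : ∀ x : X, T₁ x = (ContinuousLinearMap.adjoint V).comp (P.comp ((π x).comp V)))
    (h₂ : ∀ x : X, T₂ x =
      (ContinuousLinearMap.adjoint V).comp ((1 - P).comp ((π x).comp V))) :
    ∀ T' : X →ₗ[ℂ] (H →L[ℂ] H), CompletelyPositiveFun (⇑T') →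
      CompletelyPositiveFun (fun x => T₁ x - T' x) →
      CompletelyPositiveFun (fun x => T₂ x - T' x) →
      T' = 0 := by
  intro T' hT' hle₁ hle₂
  have hP : IsStarProjection P := ⟨hproj, hsa⟩
  let := hT'.preInnerProductCore
  let : SeminormedAddCommGroup (X →₀ H) := InnerProductSpace.Core.toSeminormedAddCommGroup (𝕜 := ℂ)
  have hnorm : ∀ f : X →₀ H, ‖f‖ = 0 :=
    norm_eq_zero_of_le_complementary_projections (L := (stinespringMap π V).toAddMonoidHom)
      hmin.denseRange_stinespringMap hP (sqrt_re_stinespringForm_le hP hcomm hle₁ h₁)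
      (sqrt_re_stinespringForm_le hP.one_sub (fun x => (Commute.one_left _).sub_left (hcomm x))
        hle₂ h₂)
  ext a v
  have hcs := InnerProductSpace.Core.norm_inner_le_norm (𝕜 := ℂ) (Finsupp.single 1 (T' a v))
    (Finsupp.single a v)
  rw [hnorm (Finsupp.single a v), mul_zero, norm_le_zero_iff] at hcs
  change stinespringForm T' _ _ = 0 at hcs
  rw [stinespringForm_single_single, star_one, one_mul, inner_self_eq_zero] at hcs
  simpa using hcs

/-- If `T = T₁ + T₂` with minimal Stinespring representation `(π, K, V)` and a projection
`P ∈ π(X)′` implements `T₁` and `T₂`, then any CP map `T'` with `T' ≤ T₁` and `T' ≤ T₂`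
is zero. -/
theorem cp_orthogonal_of_projection
    {X : Type*} [NormedRing X] [StarRing X] [CStarRing X]
    [NormedAlgebra ℂ X] [StarModule ℂ X]
    {H K : Type*} [NormedAddCommGroup H] [InnerProductSpace ℂ H] [CompleteSpace H]
    [NormedAddCommGroup K] [InnerProductSpace ℂ K] [CompleteSpace K]
    (T₁ T₂ : X →ₗ[ℂ] (H →L[ℂ] H))
    (hT₁ : CompletelyPositiveFun (⇑T₁)) (hT₂ : CompletelyPositiveFun (⇑T₂))
    (π : X →⋆ₐ[ℂ] (K →L[ℂ] K)) (V : H →L[ℂ] K)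
    (hst : IsStinespring (fun x => T₁ x + T₂ x) π V) (hmin : IsMinimalStinespring π V)
    (P : K →L[ℂ] K) (hproj : IsIdempotentElem P) (hsa : IsSelfAdjoint P)
    (hcomm : ∀ x : X, P * π x = π x * P)
    (h₁ : ∀ x : X, T₁ x = (ContinuousLinearMap.adjoint V).comp (P.comp ((π x).comp V)))
    (h₂ : ∀ x : X, T₂ x =
      (ContinuousLinearMap.adjoint V).comp ((1 - P).comp ((π x).comp V))) :
    ∀ T' : X →ₗ[ℂ] (H →L[ℂ] H), CompletelyPositiveFun (⇑T') →
      CompletelyPositiveFun (fun x => T₁ x - T' x) →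
      CompletelyPositiveFun (fun x => T₂ x - T' x) →
      T' = 0 :=
  cp_orthogonal_of_projection_general T₁ T₂ π V hmin P hproj hsa hcomm h₁ h₂
end
end

section
/- Conversely, if the map κ_μ : L^∞(ν) → π_T(X)′ associated to a CP-measure space (S,F,μ) with barycenter T is a *-homomorphism, then for every Δ ∈ F the maps μ(Δ) and μ(Δᶜ) are orthogonal, i.e. κ_μ(χ_Δ) and κ_μ(χ_{Δᶜ}) are mutually orthogonal projections summing to the identity. -/
open scoped ComplexOrder InnerProductSpace

noncomputable section

open MeasureTheory

section CPMeasure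

variable {X : Type*} [NormedRing X] [StarRing X] [CStarRing X]
  [NormedAlgebra ℂ X] [StarModule ℂ X]
variable {H K : Type*} [NormedAddCommGroup H] [InnerProductSpace ℂ H] [CompleteSpace H]
  [NormedAddCommGroup K] [InnerProductSpace ℂ K] [CompleteSpace K]
variable {S : Type*} [MeasurableSpace S]

/-- `μ` is a CP-measure on `(S, F)` with values in the von Neumann algebra `M`:
each `μ(Δ)` is a CP map from `X` into `M`, and `μ` is countably additive in the weak
sense (against all vector functionals, hence against all normal functionals). -/
def IsCPMeasure (M : VonNeumannAlgebra H) (μ : Set S → X → (H →L[ℂ] H)) : Prop :=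
  (∀ Δ : Set S, MeasurableSet Δ →
      IsLinearMap ℂ (μ Δ) ∧ CompletelyPositiveFun (μ Δ) ∧ ∀ x : X, μ Δ x ∈ M) ∧
  (∀ Δ : ℕ → Set S, (∀ i, MeasurableSet (Δ i)) → Pairwise (Function.onFun Disjoint Δ) →
    ∀ (x : X) (ξ η : H), ⟪ξ, μ (⋃ i, Δ i) x η⟫_ℂ = ∑' i, ⟪ξ, μ (Δ i) x η⟫_ℂ)

/-- The sequence `e` with `∑ ‖e n‖² = 1` determines the normal state
`ρ(A) = ∑ₙ ⟨e n, A (e n)⟩` on `B(H)`; faithfulness on `M` is required. -/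
def IsNormalFaithfulStateOn (M : VonNeumannAlgebra H) (e : ℕ → H) : Prop :=
  (∑' n, (‖e n‖ : ℝ) ^ 2 = 1) ∧
  ∀ A : H →L[ℂ] H, A ∈ M → A.IsPositive → (∑' n, ⟪e n, A (e n)⟫_ℂ) = 0 → A = 0

/-- `ν` is equivalent (mutually absolutely continuous) to the scalar measure
`ρ ∘ μ : Δ ↦ ∑ₙ ⟨e n, μ(Δ)(1) (e n)⟩`. -/
def IsEquivalentBaseMeasure (μ : Set S → X → (H →L[ℂ] H)) (e : ℕ → H)
    (ν : Measure S) : Prop :=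
  ∀ Δ : Set S, MeasurableSet Δ → (ν Δ = 0 ↔ (∑' n, ⟪e n, μ Δ 1 (e n)⟫_ℂ) = 0)

/-- `R` satisfies the defining property of `κ_μ(f)`: for every vector functional
`⟨ξ, · η⟩`, every `x ∈ X`, and every `ν`-density `g` of the complex measure
`Δ ↦ ⟨ξ, μ(Δ)(x) η⟩`, one has `⟨ξ, (V* R π(x) V) η⟩ = ∫ f g dν`, i.e. weakly
`V* R π(x) V = ∫ f(s) dμ(s, x)`. -/
def IsKappa (μ : Set S → X → (H →L[ℂ] H)) (ν : Measure S)
    (π : X →⋆ₐ[ℂ] (K →L[ℂ] K)) (V : H →L[ℂ] K) (f : S → ℂ) (R : K →L[ℂ] K) : Prop :=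
  ∀ (x : X) (ξ η : H) (g : S → ℂ), Integrable g ν →
    (∀ Δ : Set S, MeasurableSet Δ → ⟪ξ, μ Δ x η⟫_ℂ = ∫ s in Δ, g s ∂ν) →
    ⟪ξ, ((ContinuousLinearMap.adjoint V).comp (R.comp ((π x).comp V))) η⟫_ℂ
      = ∫ s, f s * g s ∂ν

end CPMeasure

/-!
Multiplicativity and the star property make every `κ(χ_s)` a projection, and
`κ(χ_Δ) κ(χ_Δᶜ) = κ(χ_∅)`. Testing the weak defining property of `κ` against a `ν`-density of
`⟪ξ, μ(·)(x) η⟫` gives `V* κ(χ_s) π(x) V = μ(s)(x)`. Such densities exist by Radon–Nikodym: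
first for the positive measures `⟪ζ, μ(·)(c* c) ζ⟫`, which are absolutely continuous with
respect to `ν` because the state is faithful, and then for all `x, ξ, η` by polarization in
both `X` and `H`. Finally, by minimality of the Stinespring dilation an operator commuting with
`π(X)` vanishes once all its compressions `V* A π(x) V` do; this kills `κ(χ_∅)` (as `μ(∅) = 0`)
and `κ(χ_Δ) + κ(χ_Δᶜ) - 1` (as `μ(Δ) + μ(Δᶜ) = μ(S) = V* π(·) V`).
-/

open Function

section CompletelyPositive

variable {A B : Type*} [Ring A] [StarRing A]

theorem CompletelyPositiveFun.map_star_mul_self_nonneg [Ring B] [StarRing B] [PartialOrder B]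
    [StarOrderedRing B] {T : A → B} (hT : CompletelyPositiveFun T) (c : A) :
    0 ≤ T (star c * c) := by
  obtain ⟨N, hN⟩ := hT 1 (Matrix.of fun _ _ => star c * c)
    ⟨Matrix.of fun _ _ => c, by ext i j; simp [Matrix.mul_apply]⟩
  have h00 := congrFun₂ hN 0 0
  simp only [Matrix.map_apply, Matrix.of_apply, Matrix.mul_apply, Matrix.conjTranspose_apply,
    Fin.sum_univ_one] at h00
  exact h00 ▸ star_mul_self_nonneg _

theorem CStarRing.eq_zero_of_star_mul_self_add_star_mul_self_eq_zero [NonUnitalNormedRing B]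
    [StarRing B] [CStarRing B] [PartialOrder B] [StarOrderedRing B] {a b : B}
    (h : star a * a + star b * b = 0) : a = 0 :=
  CStarRing.star_mul_self_eq_zero_iff a |>.1 <|
    ((add_eq_zero_iff_of_nonneg (star_mul_self_nonneg a) (star_mul_self_nonneg b)).1 h).1

theorem CompletelyPositiveFun.eq_zero_of_map_one_eq_zero [NormedRing B] [StarRing B]
    [CStarRing B] [PartialOrder B] [StarOrderedRing B] {T : A → B}
    (hT : CompletelyPositiveFun T) (h1 : T 1 = 0) (x : A) : T x = 0 := by
  obtain ⟨N, hN⟩ := hT 2 !![1, x; star x, star x * x] ⟨!![1, x; 0, 0], by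
    ext i j; fin_cases i <;> fin_cases j <;> simp [Matrix.mul_apply, Fin.sum_univ_two]⟩
  have h00 := congrFun₂ hN 0 0
  have h01 := congrFun₂ hN 0 1
  simp only [Matrix.map_apply, Matrix.of_apply, Matrix.mul_apply, Matrix.conjTranspose_apply,
    Fin.sum_univ_two, Matrix.cons_val', Matrix.cons_val_zero, Matrix.cons_val_one,
    Matrix.empty_val', Matrix.cons_val_fin_one, h1] at h00 h01
  have hN00 := CStarRing.eq_zero_of_star_mul_self_add_star_mul_self_eq_zero h00.symm
  have hN10 := CStarRing.eq_zero_of_star_mul_self_add_star_mul_self_eq_zero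
    ((add_comm _ _).trans h00.symm)
  simp [h01, hN00, hN10]

end CompletelyPositive

section CountablyAdditive

variable {S : Type*} [MeasurableSpace S]

def IsCountablyAdditive {M : Type*} [AddCommMonoid M] [TopologicalSpace M] (m : Set S → M) :
    Prop :=
  ∀ Δ : ℕ → Set S, (∀ i, MeasurableSet (Δ i)) → Pairwise (Disjoint on Δ) →
    m (⋃ i, Δ i) = ∑' i, m (Δ i)

namespace IsCountablyAdditive

section Group

variable {M : Type*} [AddCommGroup M] [TopologicalSpace M] [IsTopologicalAddGroup M] [T2Space M]
  {m : Set S → M}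

/-- A nonzero constant is not summable over `ℕ`, so the junk value of its `tsum` is `0`. -/
theorem empty (hm : IsCountablyAdditive m) : m ∅ = 0 := by
  simpa [tsum_const] using hm (fun _ => ∅) (fun _ => .empty) fun _ _ _ => disjoint_bot_left

theorem union (hm : IsCountablyAdditive m) {A B : Set S} (hA : MeasurableSet A)
    (hB : MeasurableSet B) (hAB : Disjoint A B) : m (A ∪ B) = m A + m B := by
  have hd : Pairwise (Disjoint on fun b : Bool => cond b A B) := by
    rintro (_ | _) (_ | _) h
    exacts [absurd rfl h, hAB.symm, hAB, absurd rfl h]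
  rw [Set.union_eq_iUnion, ← Encodable.iUnion_decode₂,
    hm _ (fun _ => Encodable.iUnion_decode₂_cases (C := MeasurableSet) .empty (Bool.rec hB hA))
      (Encodable.iUnion_decode₂_disjoint_on hd),
    tsum_iUnion_decode₂ m hm.empty, tsum_fintype, Fintype.sum_bool, cond_true, cond_false]

end Group

variable {m : Set S → ℝ}

theorem mono (hm : IsCountablyAdditive m) (h0 : ∀ s, MeasurableSet s → 0 ≤ m s) {A B : Set S}
    (hA : MeasurableSet A) (hB : MeasurableSet B) (hAB : A ⊆ B) : m A ≤ m B := by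
  rw [← Set.union_sdiff_cancel hAB, hm.union hA (hB.diff hA) Set.disjoint_sdiff_right]
  linarith [h0 _ (hB.diff hA)]

/-- If the series diverged, its junk `tsum` would force `m (⋃ i, Δ i) = 0`, hence by
monotonicity every term vanishes. -/
theorem summable (hm : IsCountablyAdditive m) (h0 : ∀ s, MeasurableSet s → 0 ≤ m s)
    {Δ : ℕ → Set S} (hΔ : ∀ i, MeasurableSet (Δ i)) (hd : Pairwise (Disjoint on Δ)) :
    Summable fun i => m (Δ i) := by
  by_contra hns
  have hU : m (⋃ i, Δ i) = 0 := by rw [hm Δ hΔ hd, tsum_eq_zero_of_not_summable hns]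
  refine hns (summable_zero.congr fun i => ?_)
  exact le_antisymm (h0 _ (hΔ i)) (hU ▸ hm.mono h0 (hΔ i) (.iUnion hΔ) (Set.subset_iUnion Δ i))

theorem exists_measure (hm : IsCountablyAdditive m) (h0 : ∀ s, MeasurableSet s → 0 ≤ m s) :
    ∃ ρ : Measure S, IsFiniteMeasure ρ ∧ ∀ s, MeasurableSet s → ρ s = ENNReal.ofReal (m s) := by
  let ρ : Measure S := .ofMeasurable (fun s _ => ENNReal.ofReal (m s)) (by simp [hm.empty])
    fun Δ hΔ hd => by
      rw [hm Δ hΔ hd,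
        ENNReal.ofReal_tsum_of_nonneg (fun i => h0 _ (hΔ i)) (hm.summable h0 hΔ hd)]
  have hρ : ∀ s, MeasurableSet s → ρ s = ENNReal.ofReal (m s) := fun s hs =>
    Measure.ofMeasurable_apply s hs
  exact ⟨ρ, ⟨by simp [hρ _ .univ]⟩, hρ⟩

theorem exists_density (hm : IsCountablyAdditive m) (h0 : ∀ s, MeasurableSet s → 0 ≤ m s)
    {ν : Measure S} [SigmaFinite ν] (hν : ∀ s, MeasurableSet s → ν s = 0 → m s = 0) :
    ∃ g : S → ℝ, Integrable g ν ∧ ∀ s, MeasurableSet s → m s = ∫ x in s, g x ∂ν := by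
  obtain ⟨ρ, _, hρ⟩ := hm.exists_measure h0
  have hρν : ρ ≪ ν := .mk fun s hs hνs => by simp [hρ s hs, hν s hs hνs]
  refine ⟨fun x => (ρ.rnDeriv ν x).toReal, Measure.integrable_toReal_rnDeriv, fun s hs => ?_⟩
  rw [Measure.setIntegral_toReal_rnDeriv hρν, measureReal_def, hρ s hs,
    ENNReal.toReal_ofReal (h0 s hs)]

end IsCountablyAdditive

end CountablyAdditive

section Density

variable {S : Type*} [MeasurableSpace S]

def HasDensity (ν : Measure S) (m : Set S → ℂ) : Prop :=
  ∃ g : S → ℂ, Integrable g ν ∧ ∀ s, MeasurableSet s → m s = ∫ x in s, g x ∂ν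

theorem HasDensity.of_forall_eq_sum {ν : Measure S} {ι : Type*} {t : Finset ι} {c : ι → ℂ}
    {m : ι → Set S → ℂ} (hm : ∀ i, HasDensity ν (m i)) {m' : Set S → ℂ}
    (h : ∀ s, MeasurableSet s → m' s = ∑ i ∈ t, c i * m i s) : HasDensity ν m' := by
  choose g hg hgm using hm
  refine ⟨fun x => ∑ i ∈ t, c i * g i x, integrable_finsetSum _ fun i _ => (hg i).const_mul _,
    fun s hs => ?_⟩
  rw [h s hs, integral_finsetSum _ fun i _ => ((hg i).const_mul _).integrableOn]
  simp only [integral_const_mul, hgm _ s hs]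

end Density

section Polarization

open Complex

theorem inner_map_eq_sum_polarization {E : Type*} [SeminormedAddCommGroup E]
    [InnerProductSpace ℂ E] (T : E →ₗ[ℂ] E) (ξ η : E) :
    ⟪ξ, T η⟫_ℂ = ∑ k ∈ Finset.range 4, (I ^ k / 4) * ⟪η + I ^ k • ξ, T (η + I ^ k • ξ)⟫_ℂ := by
  simp only [Finset.sum_range_succ, Finset.sum_range_zero, map_add, map_smul, inner_add_left,
    inner_add_right, inner_smul_left, inner_smul_right, map_pow, conj_I]
  grind [I_sq]

theorem eq_sum_polarization_star_mul_self {X : Type*} [Ring X] [StarRing X] [Algebra ℂ X]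
    [StarModule ℂ X] (x : X) :
    x = ∑ k ∈ Finset.range 4, (I ^ k / 4) • (star (x + I ^ k • 1) * (x + I ^ k • 1)) := by
  simp only [Finset.sum_range_succ, Finset.sum_range_zero, star_add, star_smul, star_one,
    add_mul, mul_add, smul_mul_assoc, mul_smul_comm, mul_one, one_mul, smul_add, smul_smul,
    RCLike.star_def, map_pow, conj_I]
  match_scalars <;> grind [I_sq]

end Polarization

namespace IsCPMeasure

variable {X : Type*} [NormedRing X] [StarRing X] [NormedAlgebra ℂ X]
  {H : Type*} [NormedAddCommGroup H] [InnerProductSpace ℂ H] [CompleteSpace H]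
  {S : Type*} [MeasurableSpace S] {M : VonNeumannAlgebra H} {μ : Set S → X → (H →L[ℂ] H)}

theorem isCountablyAdditive (hμ : IsCPMeasure M μ) (x : X) (ξ η : H) :
    IsCountablyAdditive fun s => ⟪ξ, μ s x η⟫_ℂ :=
  fun Δ hΔ hd => hμ.2 Δ hΔ hd x ξ η

theorem map_empty (hμ : IsCPMeasure M μ) (x : X) : μ ∅ x = 0 := by
  ext η
  exact ext_inner_left ℂ fun ξ => by simpa using (hμ.isCountablyAdditive x ξ η).empty

theorem map_union (hμ : IsCPMeasure M μ) {A B : Set S} (hA : MeasurableSet A)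
    (hB : MeasurableSet B) (hAB : Disjoint A B) (x : X) : μ (A ∪ B) x = μ A x + μ B x := by
  ext η
  refine ext_inner_left ℂ fun ξ => ?_
  rw [add_apply, inner_add_right]
  exact (hμ.isCountablyAdditive x ξ η).union hA hB hAB

theorem map_star_mul_self_nonneg (hμ : IsCPMeasure M μ) {s : Set S} (hs : MeasurableSet s)
    (c : X) : 0 ≤ μ s (star c * c) :=
  (hμ.1 s hs).2.1.map_star_mul_self_nonneg c

theorem eq_zero_of_null (hμ : IsCPMeasure M μ) {e : ℕ → H} (hρ : IsNormalFaithfulStateOn M e)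
    {ν : Measure S} (hν : IsEquivalentBaseMeasure μ e ν) {s : Set S} (hs : MeasurableSet s)
    (hνs : ν s = 0) (x : X) : μ s x = 0 := by
  obtain ⟨-, hcp, hM⟩ := hμ.1 s hs
  have hpos : (μ s 1).IsPositive := by
    simpa using
      (ContinuousLinearMap.nonneg_iff_isPositive _).1 (hμ.map_star_mul_self_nonneg hs 1)
  exact hcp.eq_zero_of_map_one_eq_zero (hρ.2 _ (hM 1) hpos ((hν s hs).1 hνs)) x

theorem hasDensity_star_mul_self (hμ : IsCPMeasure M μ) {e : ℕ → H}
    (hρ : IsNormalFaithfulStateOn M e) {ν : Measure S} [SigmaFinite ν]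
    (hν : IsEquivalentBaseMeasure μ e ν) (c : X) (ζ : H) :
    HasDensity ν fun s => ⟪ζ, μ s (star c * c) ζ⟫_ℂ := by
  have hnonneg : ∀ s, MeasurableSet s → 0 ≤ ⟪ζ, μ s (star c * c) ζ⟫_ℂ := fun s hs =>
    ((ContinuousLinearMap.nonneg_iff_isPositive _).1
      (hμ.map_star_mul_self_nonneg hs c)).inner_nonneg_right ζ
  have hreal : ∀ s, MeasurableSet s →
      ((⟪ζ, μ s (star c * c) ζ⟫_ℂ).re : ℂ) = ⟪ζ, μ s (star c * c) ζ⟫_ℂ := fun s hs =>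
    Complex.ext rfl (Complex.nonneg_iff.1 (hnonneg s hs)).2
  have hm : IsCountablyAdditive fun s => (⟪ζ, μ s (star c * c) ζ⟫_ℂ).re := fun Δ hΔ hd => by
    apply Complex.ofReal_injective
    rw [Complex.ofReal_tsum, hreal _ (.iUnion hΔ), hμ.2 Δ hΔ hd]
    exact tsum_congr fun i => (hreal _ (hΔ i)).symm
  obtain ⟨g, hg, hgm⟩ := hm.exists_density (ν := ν)
    (fun s hs => (Complex.nonneg_iff.1 (hnonneg s hs)).1)
    fun s hs hνs => by simp [hμ.eq_zero_of_null hρ hν hs hνs]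
  exact ⟨fun x => g x, hg.ofReal, fun s hs =>
    (hreal s hs).symm.trans (by rw [hgm s hs, integral_complex_ofReal])⟩

theorem hasDensity [StarModule ℂ X] (hμ : IsCPMeasure M μ) {e : ℕ → H}
    (hρ : IsNormalFaithfulStateOn M e) {ν : Measure S} [SigmaFinite ν]
    (hν : IsEquivalentBaseMeasure μ e ν) (x : X) (ξ η : H) :
    HasDensity ν fun s => ⟪ξ, μ s x η⟫_ℂ := by
  have hpos : ∀ c ξ η, HasDensity ν fun s => ⟪ξ, μ s (star c * c) η⟫_ℂ := fun c ξ η =>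
    .of_forall_eq_sum (fun k => hμ.hasDensity_star_mul_self hρ hν c _) fun s _ =>
      inner_map_eq_sum_polarization (μ s (star c * c) : H →ₗ[ℂ] H) ξ η
  refine .of_forall_eq_sum (t := Finset.range 4) (c := fun k => Complex.I ^ k / 4)
    (fun k => hpos (x + Complex.I ^ k • 1) ξ η) fun s hs => ?_
  let L : X →ₗ[ℂ] H →L[ℂ] H := IsLinearMap.mk' (μ s) (hμ.1 s hs).1
  conv_lhs => rw [← show L x = μ s x from rfl, eq_sum_polarization_star_mul_self x]
  simp [L]

end IsCPMeasure

section Stinespring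

open ContinuousLinearMap

variable {X : Type*} [NormedRing X] [StarRing X] [NormedAlgebra ℂ X]
  {H K : Type*} [NormedAddCommGroup H] [InnerProductSpace ℂ H] [CompleteSpace H]
  [NormedAddCommGroup K] [InnerProductSpace ℂ K] [CompleteSpace K]
  {π : X →⋆ₐ[ℂ] (K →L[ℂ] K)} {V : H →L[ℂ] K}

/-- `A (V η)` is orthogonal to the dense set `π(X) V H`, so `A V = 0`, and then
`A π(x) V = π(x) A V = 0`. -/
theorem IsMinimalStinespring.eq_zero_of_commute [CStarRing X] [StarModule ℂ X]
    (hmin : IsMinimalStinespring π V) {A : K →L[ℂ] K} (hcomm : ∀ x, Commute A (π x))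
    (h0 : ∀ x, (adjoint V).comp (A.comp ((π x).comp V)) = 0) : A = 0 := by
  set G := {k : K | ∃ (x : X) (h : H), k = π x (V h)}
  have hAV : ∀ η, A (V η) = 0 := by
    intro η
    have hortho : Submodule.span ℂ G ⟂ Submodule.span ℂ {A (V η)} := by
      rw [Submodule.isOrtho_span]
      rintro _ ⟨x, h, rfl⟩ _ rfl
      calc ⟪π x (V h), A (V η)⟫_ℂ
          = ⟪V h, π (star x) (A (V η))⟫_ℂ := by
            rw [map_star, star_eq_adjoint, adjoint_inner_right]
        _ = ⟪h, ((adjoint V).comp (A.comp ((π (star x)).comp V))) η⟫_ℂ := by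
            simp only [ContinuousLinearMap.comp_apply, adjoint_inner_right]
            exact congr_arg _ (DFunLike.congr_fun (hcomm (star x)).eq (V η)).symm
        _ = 0 := by rw [h0, zero_apply, inner_zero_right]
    have hmem := hortho.symm (Submodule.mem_span_singleton_self (A (V η)))
    rwa [Submodule.topologicalClosure_eq_top_iff.1 hmin] at hmem
  refine ext_on (Submodule.dense_iff_topologicalClosure_eq_top.2 hmin) ?_
  rintro _ ⟨x, h, rfl⟩
  exact (DFunLike.congr_fun (hcomm x).eq (V h)).trans (by simp [hAV])

theorem IsMinimalStinespring.eq_of_commute [CStarRing X] [StarModule ℂ X]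
    (hmin : IsMinimalStinespring π V) {A B : K →L[ℂ] K} (hA : ∀ x, Commute A (π x))
    (hB : ∀ x, Commute B (π x))
    (h : ∀ x, (adjoint V).comp (A.comp ((π x).comp V)) = (adjoint V).comp (B.comp ((π x).comp V))) :
    A = B :=
  sub_eq_zero.1 <| hmin.eq_zero_of_commute (fun x => (hA x).sub_left (hB x)) fun x => by
    rw [sub_comp, comp_sub, h, sub_self]

variable {S : Type*} [MeasurableSpace S] {μ : Set S → X → (H →L[ℂ] H)} {ν : Measure S}

theorem IsKappa.compression_eq_of_indicator {s : Set S} {R : K →L[ℂ] K}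
    (hR : IsKappa μ ν π V (s.indicator fun _ => 1) R) (hs : MeasurableSet s)
    (hμ : ∀ x ξ η, HasDensity ν fun t => ⟪ξ, μ t x η⟫_ℂ) (x : X) :
    (adjoint V).comp (R.comp ((π x).comp V)) = μ s x := by
  ext η
  refine ext_inner_left ℂ fun ξ => ?_
  obtain ⟨g, hg, hgm⟩ := hμ x ξ η
  rw [hR x ξ η g hg hgm]
  refine .trans ?_ (hgm s hs).symm
  simp_rw [← integral_indicator hs, ← Set.indicator_mul_left, one_mul]

end Stinespring

/-- Conversely, if `κ_μ` is a *-homomorphism, then for every measurable `Δ` the maps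
`μ(Δ)` and `μ(Δᶜ)` are orthogonal: `κ_μ(χ_Δ)` and `κ_μ(χ_{Δᶜ})` are mutually
orthogonal projections summing to the identity, implementing `μ(Δ)` and `μ(Δᶜ)`. -/
theorem orthogonal_of_kappa_star_hom
    {X : Type*} [NormedRing X] [StarRing X] [CStarRing X]
    [NormedAlgebra ℂ X] [StarModule ℂ X]
    {H K : Type*} [NormedAddCommGroup H] [InnerProductSpace ℂ H] [CompleteSpace H]
    [NormedAddCommGroup K] [InnerProductSpace ℂ K] [CompleteSpace K]
    {S : Type*} [MeasurableSpace S]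
    (M : VonNeumannAlgebra H) (μ : Set S → X → (H →L[ℂ] H))
    (hμ : IsCPMeasure M μ)
    (e : ℕ → H) (hρ : IsNormalFaithfulStateOn M e)
    (ν : MeasureTheory.Measure S) [MeasureTheory.IsFiniteMeasure ν]
    (hν : IsEquivalentBaseMeasure μ e ν)
    (π : X →⋆ₐ[ℂ] (K →L[ℂ] K)) (V : H →L[ℂ] K)
    (hst : IsStinespring (μ Set.univ) π V) (hmin : IsMinimalStinespring π V)
    (κ : (S → ℂ) → (K →L[ℂ] K))
    (hκ : ∀ f : S → ℂ, Measurable f → (∃ C : ℝ, ∀ s, ‖f s‖ ≤ C) →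
      (∀ x : X, κ f * π x = π x * κ f) ∧ IsKappa μ ν π V f (κ f))
    (hmul : ∀ f g : S → ℂ, Measurable f → (∃ C : ℝ, ∀ s, ‖f s‖ ≤ C) →
      Measurable g → (∃ C : ℝ, ∀ s, ‖g s‖ ≤ C) →
      κ (fun s => f s * g s) = κ f * κ g)
    (hstar : ∀ f : S → ℂ, Measurable f → (∃ C : ℝ, ∀ s, ‖f s‖ ≤ C) →
      κ (fun s => star (f s)) = ContinuousLinearMap.adjoint (κ f)) :
    ∀ Δ : Set S, MeasurableSet Δ →
      IsIdempotentElem (κ (Set.indicator Δ (fun _ => (1 : ℂ)))) ∧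
      IsSelfAdjoint (κ (Set.indicator Δ (fun _ => (1 : ℂ)))) ∧
      IsIdempotentElem (κ (Set.indicator Δᶜ (fun _ => (1 : ℂ)))) ∧
      IsSelfAdjoint (κ (Set.indicator Δᶜ (fun _ => (1 : ℂ)))) ∧
      κ (Set.indicator Δ (fun _ => (1 : ℂ))) * κ (Set.indicator Δᶜ (fun _ => (1 : ℂ))) = 0 ∧
      κ (Set.indicator Δ (fun _ => (1 : ℂ))) + κ (Set.indicator Δᶜ (fun _ => (1 : ℂ))) = 1 ∧
      (∀ x : X, μ Δ x = (ContinuousLinearMap.adjoint V).comp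
        ((κ (Set.indicator Δ (fun _ => (1 : ℂ)))).comp ((π x).comp V))) ∧
      (∀ x : X, μ Δᶜ x = (ContinuousLinearMap.adjoint V).comp
        ((κ (Set.indicator Δᶜ (fun _ => (1 : ℂ)))).comp ((π x).comp V))) := by
  intro Δ hΔ
  have hχ : ∀ s : Set S, MeasurableSet s → Measurable (s.indicator fun _ => (1 : ℂ)) ∧
      ∃ C : ℝ, ∀ x, ‖s.indicator (fun _ => (1 : ℂ)) x‖ ≤ C := fun s hs =>
    ⟨measurable_const.indicator hs, 1, fun x =>
      (norm_indicator_le_norm_self _ x).trans (by simp)⟩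
  have hcomm : ∀ s, MeasurableSet s → ∀ x, Commute (κ (s.indicator fun _ => 1)) (π x) :=
    fun s hs => (hκ _ (hχ s hs).1 (hχ s hs).2).1
  have hcompr : ∀ s, MeasurableSet s → ∀ x,
      (ContinuousLinearMap.adjoint V).comp ((κ (s.indicator fun _ => 1)).comp ((π x).comp V)) =
        μ s x := fun s hs =>
    (hκ _ (hχ s hs).1 (hχ s hs).2).2.compression_eq_of_indicator hs (hμ.hasDensity hρ hν)
  have hproj : ∀ s, MeasurableSet s → IsStarProjection (κ (s.indicator fun _ => 1)) := by
    intro s hs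
    refine ⟨?_, ?_⟩
    · rw [IsIdempotentElem, ← hmul _ _ (hχ s hs).1 (hχ s hs).2 (hχ s hs).1 (hχ s hs).2]
      simp_rw [← Set.inter_indicator_mul, Set.inter_self, mul_one]
    · rw [IsSelfAdjoint, ContinuousLinearMap.star_eq_adjoint,
        ← hstar _ (hχ s hs).1 (hχ s hs).2]
      congr 1; ext x; by_cases hx : x ∈ s <;> simp [hx]
  have hempty : κ ((∅ : Set S).indicator fun _ => 1) = 0 :=
    hmin.eq_of_commute (hcomm ∅ .empty) (fun _ => .zero_left _) fun x => by
      rw [hcompr ∅ .empty, hμ.map_empty, ContinuousLinearMap.zero_comp,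
        ContinuousLinearMap.comp_zero]
  refine ⟨(hproj Δ hΔ).1, (hproj Δ hΔ).2, (hproj Δᶜ hΔ.compl).1, (hproj Δᶜ hΔ.compl).2, ?_, ?_,
    fun x => (hcompr Δ hΔ x).symm, fun x => (hcompr Δᶜ hΔ.compl x).symm⟩
  · rw [← hempty, ← hmul _ _ (hχ Δ hΔ).1 (hχ Δ hΔ).2 (hχ Δᶜ hΔ.compl).1 (hχ Δᶜ hΔ.compl).2]
    simp_rw [← Set.inter_indicator_mul, Set.inter_compl_self, mul_one]
  · refine hmin.eq_of_commute (fun x => (hcomm Δ hΔ x).add_left (hcomm Δᶜ hΔ.compl x))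
      (fun _ => .one_left _) fun x => ?_
    rw [ContinuousLinearMap.add_comp, ContinuousLinearMap.comp_add, hcompr Δ hΔ,
      hcompr Δᶜ hΔ.compl, ← hμ.map_union hΔ hΔ.compl disjoint_compl_right, Set.union_compl_self,
      hst x, ContinuousLinearMap.one_def, ContinuousLinearMap.id_comp]
end
end

section
/- If T₁, T₂ are CP maps X → B(H) with disjoint minimal Stinespring representations (no nonzero subrepresentation of π_{T₁} is unitarily equivalent to a subrepresentation of π_{T₂}), and T = T₁+T₂, then the projection P ∈ π_T(X)′ with T₁ = V_T* P π_T(·)V_T lies in the center π_T(X)′ ∩ π_T(X)″. -/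
open scoped ComplexOrder InnerProductSpace

noncomputable section

/-!
Compressing `(π, V)` by `P` and by `1 - P` gives Stinespring dilations `(π, P V)` of `T₁` and
`(π, (1 - P) V)` of `T₂`. By uniqueness of minimal dilations there are intertwiners `S₁ : K₁ → K`
and `S₂ : K₂ → K` with `S₁ π₁(x) V₁ = π(x) P V` and `S₂ π₂(x) V₂ = π(x) (1 - P) V`. For `B` in the
commutant of `π`, the operator `S₂* B S₁` intertwines `π₁` with `π₂`, so it vanishes by
disjointness, and minimality of `(π, V)` turns this into `S₂* B P = 0`. Since the commutant is
closed under adjoints, also `P B S₂ = 0`, i.e. `P B (1 - P) = 0`; applied to `B` and `B*` this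
says that `P` commutes with `B`.
-/

open scoped InnerProduct
open ContinuousLinearMap Submodule

theorem exists_continuousLinearMap_apply_eq_of_inner_eq {𝕜 ι E F : Type*} [RCLike 𝕜]
    [NormedAddCommGroup E] [InnerProductSpace 𝕜 E]
    [NormedAddCommGroup F] [InnerProductSpace 𝕜 F] [CompleteSpace F]
    {f : ι → E} {g : ι → F} (hf : Dense (span 𝕜 (Set.range f) : Set E))
    (hfg : ∀ i j, ⟪f i, f j⟫_𝕜 = ⟪g i, g j⟫_𝕜) :
    ∃ S : E →L[𝕜] F, ∀ i, S (f i) = g i := by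
  let Φ := Finsupp.linearCombination 𝕜 f
  let Ψ := Finsupp.linearCombination 𝕜 g
  have hinner (a b : ι →₀ 𝕜) : ⟪Φ a, Φ b⟫_𝕜 = ⟪Ψ a, Ψ b⟫_𝕜 := by
    simp [Φ, Ψ, Finsupp.linearCombination_apply, Finsupp.sum, sum_inner, inner_sum,
      inner_smul_left, inner_smul_right, hfg]
  have hnorm (a : ι →₀ 𝕜) : ‖Ψ a‖ ≤ 1 * ‖Φ a‖ := by
    rw [one_mul, ← sq_le_sq₀ (norm_nonneg _) (norm_nonneg _), ← inner_self_eq_norm_sq (𝕜 := 𝕜),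
      ← inner_self_eq_norm_sq (𝕜 := 𝕜), hinner]
  have hdense : DenseRange Φ := by
    rwa [DenseRange, ← LinearMap.coe_range, Finsupp.range_linearCombination]
  refine ⟨Ψ.extendOfNorm Φ, fun i => ?_⟩
  simpa [Φ, Ψ] using LinearMap.extendOfNorm_eq hdense ⟨1, hnorm⟩ (Finsupp.single i 1)

section Intertwines

variable {R X E₁ E₂ E₃ : Type*} [Semiring R]
  [AddCommMonoid E₁] [Module R E₁] [TopologicalSpace E₁]
  [AddCommMonoid E₂] [Module R E₂] [TopologicalSpace E₂]
  [AddCommMonoid E₃] [Module R E₃] [TopologicalSpace E₃]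

def Intertwines (ρ₁ : X → E₁ →L[R] E₁) (ρ₂ : X → E₂ →L[R] E₂) (W : E₁ →L[R] E₂) : Prop :=
  ∀ x, W ∘L ρ₁ x = ρ₂ x ∘L W

variable {ρ₁ : X → E₁ →L[R] E₁} {ρ₂ : X → E₂ →L[R] E₂} {ρ₃ : X → E₃ →L[R] E₃}

theorem Intertwines.map_apply {W : E₁ →L[R] E₂} (hW : Intertwines ρ₁ ρ₂ W) (x : X) (v : E₁) :
    W (ρ₁ x v) = ρ₂ x (W v) :=
  congr($(hW x) v)

theorem Intertwines.comp {W : E₁ →L[R] E₂} {W' : E₂ →L[R] E₃} (hW' : Intertwines ρ₂ ρ₃ W')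
    (hW : Intertwines ρ₁ ρ₂ W) : Intertwines ρ₁ ρ₃ (W' ∘L W) := fun x => by
  rw [comp_assoc, hW x, ← comp_assoc, hW' x, comp_assoc]

end Intertwines

theorem Intertwines.one_sub {R X E : Type*} [Ring R] [AddCommGroup E] [Module R E]
    [TopologicalSpace E] [IsTopologicalAddGroup E] {ρ : X → E →L[R] E} {Q : E →L[R] E}
    (hQ : Intertwines ρ ρ Q) : Intertwines ρ ρ (1 - Q) := fun x => by
  rw [sub_comp, comp_sub, hQ x]
  rfl

theorem Intertwines.adjoint {𝕜 X E₁ E₂ : Type*} [RCLike 𝕜] [Semiring X] [Algebra 𝕜 X]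
    [InvolutiveStar X] [NormedAddCommGroup E₁] [InnerProductSpace 𝕜 E₁] [CompleteSpace E₁]
    [NormedAddCommGroup E₂] [InnerProductSpace 𝕜 E₂] [CompleteSpace E₂]
    {π₁ : X →⋆ₐ[𝕜] (E₁ →L[𝕜] E₁)} {π₂ : X →⋆ₐ[𝕜] (E₂ →L[𝕜] E₂)} {W : E₁ →L[𝕜] E₂}
    (hW : Intertwines π₁ π₂ W) : Intertwines π₂ π₁ (W†) := fun x => by
  have h := congr_arg ContinuousLinearMap.adjoint (hW (star x))
  simpa only [adjoint_comp, map_star, star_eq_adjoint, adjoint_adjoint] using h.symm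

theorem IsSelfAdjoint.commute_of_mul_mul_one_sub_eq_zero {R : Type*} [Ring R] [StarRing R]
    {p b : R} (hp : IsSelfAdjoint p) (h : p * b * (1 - p) = 0) (h' : p * star b * (1 - p) = 0) :
    Commute p b := by
  have h'' : (1 - p) * b * p = 0 := by
    simpa [mul_assoc, hp.star_eq] using congr_arg star h'
  rw [mul_sub, mul_one, sub_eq_zero] at h
  rw [sub_mul, one_mul, sub_mul, sub_eq_zero] at h''
  rw [Commute, SemiconjBy, h, h'', mul_assoc]

section Stinespring

variable {X H K : Type*} [NormedRing X] [StarRing X] [CStarRing X]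
  [NormedAlgebra ℂ X] [StarModule ℂ X]
  [NormedAddCommGroup H] [InnerProductSpace ℂ H] [CompleteSpace H]
  [NormedAddCommGroup K] [InnerProductSpace ℂ K] [CompleteSpace K]
  {π : X →⋆ₐ[ℂ] (K →L[ℂ] K)} {V : H →L[ℂ] K}

theorem IsMinimalStinespring.dense_span_range (hmin : IsMinimalStinespring π V) :
    Dense (span ℂ (Set.range fun p : X × H => π p.1 (V p.2)) : Set K) := by
  rw [dense_iff_topologicalClosure_eq_top, ← hmin]
  congr
  ext k
  simp [eq_comm]

theorem IsMinimalStinespring.ext {E : Type*} [NormedAddCommGroup E] [NormedSpace ℂ E]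
    (hmin : IsMinimalStinespring π V) {A B : K →L[ℂ] E}
    (h : ∀ x v, A (π x (V v)) = B (π x (V v))) : A = B :=
  ext_on hmin.dense_span_range fun _ ⟨p, hp⟩ => hp ▸ h p.1 p.2

theorem IsStinespring.inner_map_apply_map_apply {T : X → H →L[ℂ] H} (hst : IsStinespring T π V)
    (x y : X) (v w : H) : ⟪π x (V v), π y (V w)⟫_ℂ = ⟪v, T (star x * y) w⟫_ℂ := by
  rw [hst, ← adjoint_inner_right, map_mul, map_star, star_eq_adjoint]
  simp [adjoint_inner_right]

theorem IsStinespring.exists_intertwines_of_isMinimalStinespring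
    {K' : Type*} [NormedAddCommGroup K'] [InnerProductSpace ℂ K'] [CompleteSpace K']
    {π' : X →⋆ₐ[ℂ] (K' →L[ℂ] K')} {V' : H →L[ℂ] K'} {T : X → H →L[ℂ] H}
    (hst' : IsStinespring T π' V') (hmin' : IsMinimalStinespring π' V')
    (hst : IsStinespring T π V) :
    ∃ S : K' →L[ℂ] K, Intertwines π' π S ∧ ∀ x v, S (π' x (V' v)) = π x (V v) := by
  obtain ⟨S, hS⟩ := exists_continuousLinearMap_apply_eq_of_inner_eq hmin'.dense_span_range
    (g := fun p : X × H => π p.1 (V p.2)) fun p q => by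
      rw [hst'.inner_map_apply_map_apply, hst.inner_map_apply_map_apply]
  have hS' (x : X) (v : H) : S (π' x (V' v)) = π x (V v) := hS (x, v)
  refine ⟨S, fun x => hmin'.ext fun y v => ?_, hS'⟩
  simpa [hS'] using hS' (x * y) v

theorem isStinespring_comp_of_intertwines {T : X → H →L[ℂ] H} {Q : K →L[ℂ] K}
    (hQ : IsStarProjection Q) (hQπ : Intertwines π π Q)
    (hT : ∀ x, T x = V† ∘L (Q ∘L (π x ∘L V))) : IsStinespring T π (Q ∘L V) := fun x => by
  rw [hT, adjoint_comp, ← star_eq_adjoint Q, hQ.isSelfAdjoint.star_eq]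
  ext v
  simp only [comp_apply, ← hQπ.map_apply, ← mul_apply_eq_comp Q Q, hQ.isIdempotentElem.eq]

end Stinespring

theorem projection_central_of_disjoint_general
    {X : Type*} [NormedRing X] [StarRing X] [CStarRing X]
    [NormedAlgebra ℂ X] [StarModule ℂ X]
    {H K K₁ K₂ : Type*} [NormedAddCommGroup H] [InnerProductSpace ℂ H] [CompleteSpace H]
    [NormedAddCommGroup K] [InnerProductSpace ℂ K] [CompleteSpace K]
    [NormedAddCommGroup K₁] [InnerProductSpace ℂ K₁] [CompleteSpace K₁]
    [NormedAddCommGroup K₂] [InnerProductSpace ℂ K₂] [CompleteSpace K₂]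
    (T₁ T₂ : X →ₗ[ℂ] (H →L[ℂ] H))
    (π₁ : X →⋆ₐ[ℂ] (K₁ →L[ℂ] K₁)) (V₁ : H →L[ℂ] K₁)
    (hst₁ : IsStinespring (⇑T₁) π₁ V₁) (hmin₁ : IsMinimalStinespring π₁ V₁)
    (π₂ : X →⋆ₐ[ℂ] (K₂ →L[ℂ] K₂)) (V₂ : H →L[ℂ] K₂)
    (hst₂ : IsStinespring (⇑T₂) π₂ V₂) (hmin₂ : IsMinimalStinespring π₂ V₂)
    (hdisj : ∀ W : K₁ →L[ℂ] K₂, (∀ x : X, W.comp (π₁ x) = (π₂ x).comp W) → W = 0)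
    (π : X →⋆ₐ[ℂ] (K →L[ℂ] K)) (V : H →L[ℂ] K)
    (hmin : IsMinimalStinespring π V)
    (P : K →L[ℂ] K) (hproj : IsIdempotentElem P) (hsa : IsSelfAdjoint P)
    (hcomm : ∀ x : X, P * π x = π x * P)
    (h₁ : ∀ x : X, T₁ x = (ContinuousLinearMap.adjoint V).comp (P.comp ((π x).comp V)))
    (h₂ : ∀ x : X, T₂ x =
      (ContinuousLinearMap.adjoint V).comp ((1 - P).comp ((π x).comp V))) :
    ∀ B : K →L[ℂ] K, (∀ x : X, B * π x = π x * B) → P * B = B * P := by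
  have hPπ : Intertwines π π P := hcomm
  have hP : IsStarProjection P := ⟨hproj, hsa⟩
  obtain ⟨S₁, hS₁π, hS₁⟩ := hst₁.exists_intertwines_of_isMinimalStinespring hmin₁
    (isStinespring_comp_of_intertwines hP hPπ h₁)
  obtain ⟨S₂, hS₂π, hS₂⟩ := hst₂.exists_intertwines_of_isMinimalStinespring hmin₂
    (isStinespring_comp_of_intertwines hP.one_sub hPπ.one_sub h₂)
  have hS₂BP (B : K →L[ℂ] K) (hB : Intertwines π π B) : S₂† ∘L B ∘L P = 0 := by
    have hW : S₂† ∘L B ∘L S₁ = 0 := hdisj _ (hS₂π.adjoint.comp (hB.comp hS₁π))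
    refine hmin.ext fun x v => ?_
    rw [comp_apply, comp_apply, hPπ.map_apply, ← comp_apply P V, ← hS₁]
    exact congr($hW (π₁ x (V₁ v)))
  have hPB (B : K →L[ℂ] K) (hB : Intertwines π π B) : P * B * (1 - P) = 0 := by
    have hPBS₂ : P ∘L B ∘L S₂ = 0 := by
      have := congr(adjoint $(hS₂BP (B†) hB.adjoint))
      rwa [adjoint_comp, adjoint_comp, adjoint_adjoint, adjoint_adjoint, ← star_eq_adjoint P,
        hsa.star_eq, map_zero, comp_assoc] at this
    refine hmin.ext fun x v => ?_
    rw [mul_apply_eq_comp, mul_apply_eq_comp, hPπ.one_sub.map_apply, ← comp_apply (1 - P) V, ← hS₂]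
    exact congr($(hPBS₂) (π₂ x (V₂ v)))
  intro B (hB : Intertwines π π B)
  exact (hsa.commute_of_mul_mul_one_sub_eq_zero (hPB B hB) (hPB (B†) hB.adjoint)).eq

/-- If `T₁, T₂` are CP maps with disjoint minimal Stinespring representations (every
intertwiner between `π₁` and `π₂` is zero) and `T = T₁ + T₂`, then the projection
`P ∈ π(X)′` implementing `T₁` lies in the center `π(X)′ ∩ π(X)″`, i.e. `P` commutes
with every element of the commutant of `π(X)`. -/
theorem projection_central_of_disjoint
    {X : Type*} [NormedRing X] [StarRing X] [CStarRing X]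
    [NormedAlgebra ℂ X] [StarModule ℂ X]
    {H K K₁ K₂ : Type*} [NormedAddCommGroup H] [InnerProductSpace ℂ H] [CompleteSpace H]
    [NormedAddCommGroup K] [InnerProductSpace ℂ K] [CompleteSpace K]
    [NormedAddCommGroup K₁] [InnerProductSpace ℂ K₁] [CompleteSpace K₁]
    [NormedAddCommGroup K₂] [InnerProductSpace ℂ K₂] [CompleteSpace K₂]
    (T₁ T₂ : X →ₗ[ℂ] (H →L[ℂ] H))
    (hT₁ : CompletelyPositiveFun (⇑T₁)) (hT₂ : CompletelyPositiveFun (⇑T₂))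
    (π₁ : X →⋆ₐ[ℂ] (K₁ →L[ℂ] K₁)) (V₁ : H →L[ℂ] K₁)
    (hst₁ : IsStinespring (⇑T₁) π₁ V₁) (hmin₁ : IsMinimalStinespring π₁ V₁)
    (π₂ : X →⋆ₐ[ℂ] (K₂ →L[ℂ] K₂)) (V₂ : H →L[ℂ] K₂)
    (hst₂ : IsStinespring (⇑T₂) π₂ V₂) (hmin₂ : IsMinimalStinespring π₂ V₂)
    (hdisj : ∀ W : K₁ →L[ℂ] K₂, (∀ x : X, W.comp (π₁ x) = (π₂ x).comp W) → W = 0)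
    (π : X →⋆ₐ[ℂ] (K →L[ℂ] K)) (V : H →L[ℂ] K)
    (hst : IsStinespring (fun x => T₁ x + T₂ x) π V) (hmin : IsMinimalStinespring π V)
    (P : K →L[ℂ] K) (hproj : IsIdempotentElem P) (hsa : IsSelfAdjoint P)
    (hcomm : ∀ x : X, P * π x = π x * P)
    (h₁ : ∀ x : X, T₁ x = (ContinuousLinearMap.adjoint V).comp (P.comp ((π x).comp V)))
    (h₂ : ∀ x : X, T₂ x =
      (ContinuousLinearMap.adjoint V).comp ((1 - P).comp ((π x).comp V))) :
    ∀ B : K →L[ℂ] K, (∀ x : X, B * π x = π x * B) → P * B = B * P :=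
  projection_central_of_disjoint_general T₁ T₂ π₁ V₁ hst₁ hmin₁ π₂ V₂ hst₂ hmin₂ hdisj π V hmin P
    hproj hsa hcomm h₁ h₂
end
end
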